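/- arXiv:1506.01474 — 4 statements merged into one kernel-verified Lean document; each statement's English description precedes it below -/
import Mathlib

section
/- With f₁(t) = cn_k(γt)/(γ√(1-k²)), the function f₁ satisfies -2k₁·f₁''/f₁ + k₁(k₁-1)·(1-(f₁')²)/f₁² = k₁(k₁+3)γ⁴k²(1-k²)f₁² + k₁(k₁+1)γ²(1-2k²) at every point t where f₁(t) ≠ 0, for every real constant k₁. -/
/-- With f₁(t) = cn_k(γt)/(γ√(1-k²)), where cn_k satisfies
(cn_k')² = (1-cn_k²)(1-k²+k²cn_k²) and cn_k'' = -2k²cn_k³-(1-2k²)cn_k, 0 ≤ k < 1, γ > 0,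
for every real constant k₁ and every t with f₁(t) ≠ 0:
-2k₁·f₁''/f₁ + k₁(k₁-1)·(1-(f₁')²)/f₁² = k₁(k₁+3)γ⁴k²(1-k²)f₁² + k₁(k₁+1)γ²(1-2k²). -/
theorem cn_scaled_curvature_term
    (k γ k₁ : ℝ) (hk0 : 0 ≤ k) (hk1 : k < 1) (hγ : 0 < γ)
    (cn : ℝ → ℝ) (hcn : ContDiff ℝ (⊤ : ℕ∞) cn)
    (hode1 : ∀ t, (deriv cn t) ^ 2 = (1 - cn t ^ 2) * (1 - k ^ 2 + k ^ 2 * cn t ^ 2))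
    (hode2 : ∀ t, deriv (deriv cn) t = -2 * k ^ 2 * cn t ^ 3 - (1 - 2 * k ^ 2) * cn t)
    (f₁ : ℝ → ℝ) (hf₁ : ∀ t, f₁ t = cn (γ * t) / (γ * Real.sqrt (1 - k ^ 2))) :
    ∀ t, f₁ t ≠ 0 →
      -2 * k₁ * (deriv (deriv f₁) t / f₁ t)
        + k₁ * (k₁ - 1) * ((1 - (deriv f₁ t) ^ 2) / f₁ t ^ 2)
      = k₁ * (k₁ + 3) * γ ^ 4 * k ^ 2 * (1 - k ^ 2) * f₁ t ^ 2
        + k₁ * (k₁ + 1) * γ ^ 2 * (1 - 2 * k ^ 2) := by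
  intro t ht
  set s := Real.sqrt (1 - k ^ 2) with hs_def
  have h1k : (0:ℝ) < 1 - k ^ 2 := by nlinarith
  have hs0 : 0 < s := Real.sqrt_pos.mpr h1k
  have hs2 : s ^ 2 = 1 - k ^ 2 := Real.sq_sqrt h1k.le
  have hγs : γ * s ≠ 0 := by positivity
  have hfe : f₁ = fun u => cn (γ * u) / (γ * s) := funext hf₁
  have hdiff : Differentiable ℝ cn := hcn.differentiable (by simp)
  have hcn' : ContDiff ℝ (↑(⊤ : ℕ∞)) cn := hcn.of_le (mod_cast le_top)
  have hdiff2 : Differentiable ℝ (deriv cn) :=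
    (contDiff_infty_iff_deriv.mp hcn').2.differentiable (by simp)
  have key : ∀ g : ℝ → ℝ, Differentiable ℝ g → ∀ c : ℝ, ∀ u : ℝ,
      HasDerivAt (fun x => g (γ * x) / c) (deriv g (γ * u) * γ / c) u := by
    intro g hg c u
    have h1 : HasDerivAt (fun x : ℝ => γ * x) γ u := by
      simpa using (hasDerivAt_id u).const_mul γ
    exact ((hg (γ * u)).hasDerivAt.comp u h1).div_const c
  have hd1 : deriv f₁ = fun u => deriv cn (γ * u) / s := by
    funext u
    rw [hfe, (key cn hdiff (γ * s) u).deriv]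
    field_simp
  have hd2 : deriv (deriv f₁) t = deriv (deriv cn) (γ * t) * γ / s := by
    rw [hd1, (key (deriv cn) hdiff2 s t).deriv]
  have hcnne : cn (γ * t) ≠ 0 := by
    intro h
    apply ht
    rw [hf₁, h, zero_div]
  have h1 := hode1 (γ * t)
  have h2 := hode2 (γ * t)
  rw [hd2, hf₁ t, hd1]
  have hsne : s ≠ 0 := ne_of_gt hs0
  have hγne : γ ≠ 0 := ne_of_gt hγ
  field_simp
  have hk2 : k ^ 2 = 1 - s ^ 2 := by linarith
  rw [hk2] at h1 h2 ⊢
  rw [h2]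
  linear_combination (-(k₁ * (k₁ - 1) * s ^ 2)) * h1
end

section
/- Suppose k₁, k₂ ≥ 1 are integers, a₁, a₂ ≥ 0 are reals, γ > 0, k ∈ [0,1), and (k₁+k₂)(k₁+k₂+3)γ⁴k²(1-k²) = a₁² - (1-k²)a₂². Let f₁(t) = cn_k(γt)/(γ√(1-k²)), f₂(t) = sn_k(γt)/γ. Then at every t where f₁(t)f₂(t) ≠ 0, the expression -2k₁f₁''/f₁ + k₁(k₁-1)(1-(f₁')²)/f₁² - a₁²f₁² - 2k₂f₂''/f₂ + k₂(k₂-1)(1-(f₂')²)/f₂² - a₂²f₂² - 2k₁k₂f₁'f₂'/(f₁f₂) equals the constant -2(k₁+k₂)(k₁+1)γ²k² + (k₁+k₂)(k₁+k₂+1)γ² - a₂²/γ². -/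
private lemma deriv_scale_aux (g : ℝ → ℝ) (hg : Differentiable ℝ g) (γ A : ℝ) :
    deriv (fun t => g (γ * t) * A) = fun t => deriv g (γ * t) * γ * A := by
  funext t
  have h1 : HasDerivAt (fun x : ℝ => γ * x) γ t := by
    simpa using (hasDerivAt_id t).const_mul γ
  have h2 : HasDerivAt (fun t => g (γ * t)) (deriv g (γ * t) * γ) t :=
    (hg (γ * t)).hasDerivAt.comp t h1
  exact (h2.mul_const A).deriv

private lemma deriv_of_contDiff (g : ℝ → ℝ) (h : ContDiff ℝ (⊤ : ℕ∞) g) :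
    Differentiable ℝ (deriv g) := by
  have h' : ContDiff ℝ (↑(⊤:ℕ∞)) g := h.of_le (mod_cast le_top)
  exact (contDiff_infty_iff_deriv.mp h').2.differentiable (by simp)

private lemma JE1 (γ r c k : ℝ) (hγ0 : γ ≠ 0) (hr0 : r ≠ 0) (hc0 : c ≠ 0) :
    (-2 * k ^ 2 * c ^ 3 - (1 - 2 * k ^ 2) * c) * γ * (γ * (γ * r)⁻¹) / (c / (γ * r))
      = γ ^ 2 * (-2 * k ^ 2 * c ^ 2 - (1 - 2 * k ^ 2)) := by
  field_simp

private lemma JE2 (γ r c p k : ℝ) (hγ0 : γ ≠ 0) (hr0 : r ≠ 0) (hc0 : c ≠ 0)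
    (hr2 : r ^ 2 = 1 - k ^ 2)
    (hp2 : p ^ 2 = (1 - c ^ 2) * (1 - k ^ 2 + k ^ 2 * c ^ 2)) :
    (1 - (p * γ * (γ * r)⁻¹) ^ 2) / (c / (γ * r)) ^ 2
      = γ ^ 2 * (1 - 2 * k ^ 2 + k ^ 2 * c ^ 2) := by
  field_simp
  linear_combination hr2 - hp2

private lemma JE4 (γ s k : ℝ) (hγ0 : γ ≠ 0) (hs0 : s ≠ 0) :
    (2 * k ^ 2 * s ^ 3 - (1 + k ^ 2) * s) * γ * (γ * γ⁻¹) / (s / γ)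
      = γ ^ 2 * (2 * k ^ 2 * s ^ 2 - (1 + k ^ 2)) := by
  field_simp

private lemma JE5 (γ s q k : ℝ) (hγ0 : γ ≠ 0) (hs0 : s ≠ 0)
    (hq2 : q ^ 2 = (1 - s ^ 2) * (1 - k ^ 2 * s ^ 2)) :
    (1 - (q * γ * γ⁻¹) ^ 2) / (s / γ) ^ 2 = γ ^ 2 * (1 + k ^ 2 - k ^ 2 * s ^ 2) := by
  field_simp
  linear_combination -hq2

private lemma JE7 (γ r c s p q k : ℝ) (hγ0 : γ ≠ 0) (hr0 : r ≠ 0) (hc0 : c ≠ 0) (hs0 : s ≠ 0)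
    (hpq : p * q = -(s * c * (1 - k ^ 2 * s ^ 2))) :
    (p * γ * (γ * r)⁻¹) * (q * γ * γ⁻¹) / ((c / (γ * r)) * (s / γ))
      = -(γ ^ 2 * (1 - k ^ 2 * s ^ 2)) := by
  field_simp
  linear_combination hpq

private lemma JEfinal (γ c s k a₁ a₂ K₁ K₂ : ℝ) (hγ0 : γ ≠ 0) (hk2 : (1:ℝ) - k^2 ≠ 0)
    (hpy : c ^ 2 + s ^ 2 = 1)
    (hA : a₁ ^ 2 = (K₁ + K₂) * (K₁ + K₂ + 3) * γ ^ 4 * k ^ 2 * (1 - k ^ 2)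
      + (1 - k ^ 2) * a₂ ^ 2) :
    -2 * K₁ * (γ ^ 2 * (-2 * k ^ 2 * c ^ 2 - (1 - 2 * k ^ 2)))
      + K₁ * (K₁ - 1) * (γ ^ 2 * (1 - 2 * k ^ 2 + k ^ 2 * c ^ 2))
      - a₁ ^ 2 * (c ^ 2 / (γ ^ 2 * (1 - k ^ 2)))
      - 2 * K₂ * (γ ^ 2 * (2 * k ^ 2 * s ^ 2 - (1 + k ^ 2)))
      + K₂ * (K₂ - 1) * (γ ^ 2 * (1 + k ^ 2 - k ^ 2 * s ^ 2))
      - a₂ ^ 2 * (s ^ 2 / γ ^ 2)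
      - 2 * K₁ * K₂ * (-(γ ^ 2 * (1 - k ^ 2 * s ^ 2)))
      = -2 * (K₁ + K₂) * (K₁ + 1) * γ ^ 2 * k ^ 2
        + (K₁ + K₂) * (K₁ + K₂ + 1) * γ ^ 2 - a₂ ^ 2 / γ ^ 2 := by
  rw [hA]
  field_simp
  linear_combination (K₁*γ^4*k^2*(K₁+3) - γ^4*k^2*(K₁+K₂)*(K₁+K₂+3) - a₂^2) * hpy

/-- Lemma 3.7: for integers k₁, k₂ ≥ 1, reals a₁, a₂ ≥ 0, γ > 0, k ∈ [0,1)
satisfying the constraint (k₁+k₂)(k₁+k₂+3)γ⁴k²(1-k²) = a₁² - (1-k²)a₂², the functions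
f₁(t) = cn_k(γt)/(γ√(1-k²)), f₂(t) = sn_k(γt)/γ solve the scalar curvature ODE with
constant value -2(k₁+k₂)(k₁+1)γ²k² + (k₁+k₂)(k₁+k₂+1)γ² - a₂²/γ². -/
theorem fiberwise_join_ode
    (k₁ k₂ : ℤ) (hk₁ : 1 ≤ k₁) (hk₂ : 1 ≤ k₂)
    (a₁ a₂ : ℝ) (ha₁ : 0 ≤ a₁) (ha₂ : 0 ≤ a₂)
    (k γ : ℝ) (hk0 : 0 ≤ k) (hk1 : k < 1) (hγ : 0 < γ)
    (hconstraint : ((k₁ : ℝ) + k₂) * ((k₁ : ℝ) + k₂ + 3) * γ ^ 4 * k ^ 2 * (1 - k ^ 2)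
      = a₁ ^ 2 - (1 - k ^ 2) * a₂ ^ 2)
    (cn sn : ℝ → ℝ) (hcn : ContDiff ℝ (⊤ : ℕ∞) cn) (hsn : ContDiff ℝ (⊤ : ℕ∞) sn)
    (hpyth : ∀ t, cn t ^ 2 + sn t ^ 2 = 1)
    (hcn1 : ∀ t, (deriv cn t) ^ 2 = (1 - cn t ^ 2) * (1 - k ^ 2 + k ^ 2 * cn t ^ 2))
    (hcn2 : ∀ t, deriv (deriv cn) t = -2 * k ^ 2 * cn t ^ 3 - (1 - 2 * k ^ 2) * cn t)
    (hsn1 : ∀ t, (deriv sn t) ^ 2 = (1 - sn t ^ 2) * (1 - k ^ 2 * sn t ^ 2))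
    (hsn2 : ∀ t, deriv (deriv sn) t = 2 * k ^ 2 * sn t ^ 3 - (1 + k ^ 2) * sn t)
    (f₁ f₂ : ℝ → ℝ)
    (hf₁ : ∀ t, f₁ t = cn (γ * t) / (γ * Real.sqrt (1 - k ^ 2)))
    (hf₂ : ∀ t, f₂ t = sn (γ * t) / γ) :
    ∀ t, f₁ t * f₂ t ≠ 0 →
      -2 * (k₁ : ℝ) * (deriv (deriv f₁) t / f₁ t)
        + (k₁ : ℝ) * ((k₁ : ℝ) - 1) * ((1 - (deriv f₁ t) ^ 2) / f₁ t ^ 2)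
        - a₁ ^ 2 * f₁ t ^ 2
        - 2 * (k₂ : ℝ) * (deriv (deriv f₂) t / f₂ t)
        + (k₂ : ℝ) * ((k₂ : ℝ) - 1) * ((1 - (deriv f₂ t) ^ 2) / f₂ t ^ 2)
        - a₂ ^ 2 * f₂ t ^ 2
        - 2 * (k₁ : ℝ) * (k₂ : ℝ) * ((deriv f₁ t * deriv f₂ t) / (f₁ t * f₂ t))
      = -2 * ((k₁ : ℝ) + k₂) * ((k₁ : ℝ) + 1) * γ ^ 2 * k ^ 2
        + ((k₁ : ℝ) + k₂) * ((k₁ : ℝ) + k₂ + 1) * γ ^ 2 - a₂ ^ 2 / γ ^ 2 := by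
  have hk2pos : (0:ℝ) < 1 - k ^ 2 := by nlinarith
  have hr2 : Real.sqrt (1 - k ^ 2) ^ 2 = 1 - k ^ 2 := Real.sq_sqrt hk2pos.le
  have hγ0 : γ ≠ 0 := hγ.ne'
  have hr0 : Real.sqrt (1 - k ^ 2) ≠ 0 := (Real.sqrt_pos.mpr hk2pos).ne'
  have hdcn : Differentiable ℝ cn := hcn.differentiable (by simp)
  have hdsn : Differentiable ℝ sn := hsn.differentiable (by simp)
  have hdcn' : Differentiable ℝ (deriv cn) := deriv_of_contDiff cn hcn
  have hdsn' : Differentiable ℝ (deriv sn) := deriv_of_contDiff sn hsn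
  have Hf₁ : f₁ = fun t => cn (γ * t) * (γ * Real.sqrt (1 - k ^ 2))⁻¹ := funext fun t => by
    rw [hf₁ t, div_eq_mul_inv]
  have Hf₂ : f₂ = fun t => sn (γ * t) * γ⁻¹ := funext fun t => by
    rw [hf₂ t, div_eq_mul_inv]
  have Hd₁ : deriv f₁ = fun t => deriv cn (γ * t) * γ * (γ * Real.sqrt (1 - k ^ 2))⁻¹ := by
    rw [Hf₁]; exact deriv_scale_aux cn hdcn γ _
  have Hd₁' : deriv f₁ = fun t => deriv cn (γ * t) * (γ * (γ * Real.sqrt (1 - k ^ 2))⁻¹) := by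
    rw [Hd₁]; funext x; ring
  have Hdd₁ : deriv (deriv f₁)
      = fun t => deriv (deriv cn) (γ * t) * γ * (γ * (γ * Real.sqrt (1 - k ^ 2))⁻¹) := by
    rw [Hd₁']; exact deriv_scale_aux (deriv cn) hdcn' γ _
  have Hd₂ : deriv f₂ = fun t => deriv sn (γ * t) * γ * γ⁻¹ := by
    rw [Hf₂]; exact deriv_scale_aux sn hdsn γ _
  have Hd₂' : deriv f₂ = fun t => deriv sn (γ * t) * (γ * γ⁻¹) := by
    rw [Hd₂]; funext x; ring
  have Hdd₂ : deriv (deriv f₂) = fun t => deriv (deriv sn) (γ * t) * γ * (γ * γ⁻¹) := by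
    rw [Hd₂']; exact deriv_scale_aux (deriv sn) hdsn' γ _
  have hsum : ∀ x, cn x * deriv cn x + sn x * deriv sn x = 0 := by
    intro x
    have h1 := (((hdcn x).hasDerivAt.pow 2).add ((hdsn x).hasDerivAt.pow 2))
    have h2 : (cn ^ 2 + sn ^ 2) = fun _ => (1:ℝ) := funext hpyth
    rw [h2] at h1
    have h3 := h1.deriv
    rw [deriv_const] at h3
    norm_num at h3
    linarith
  intro t ht
  obtain ⟨h10, h20⟩ := mul_ne_zero_iff.mp ht
  have hc0 : cn (γ * t) ≠ 0 := fun h => h10 (by rw [hf₁ t, h, zero_div])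
  have hs0 : sn (γ * t) ≠ 0 := fun h => h20 (by rw [hf₂ t, h, zero_div])
  have hpq : deriv cn (γ * t) * deriv sn (γ * t)
      = -(sn (γ * t) * cn (γ * t) * (1 - k ^ 2 * sn (γ * t) ^ 2)) := by
    apply mul_left_cancel₀ hc0
    linear_combination (deriv sn (γ * t)) * hsum (γ * t) - sn (γ * t) * hsn1 (γ * t)
      + (sn (γ * t) * (1 - k ^ 2 * sn (γ * t) ^ 2)) * hpyth (γ * t)
  have E1 : deriv (deriv f₁) t / f₁ t
      = γ ^ 2 * (-2 * k ^ 2 * cn (γ * t) ^ 2 - (1 - 2 * k ^ 2)) := by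
    simp only [Hdd₁, hf₁]
    rw [hcn2]
    exact JE1 γ _ _ k hγ0 hr0 hc0
  have E2 : (1 - (deriv f₁ t) ^ 2) / f₁ t ^ 2
      = γ ^ 2 * (1 - 2 * k ^ 2 + k ^ 2 * cn (γ * t) ^ 2) := by
    simp only [Hd₁, hf₁]
    exact JE2 γ _ _ _ k hγ0 hr0 hc0 hr2 (hcn1 (γ * t))
  have E3 : f₁ t ^ 2 = cn (γ * t) ^ 2 / (γ ^ 2 * (1 - k ^ 2)) := by
    rw [hf₁ t, div_pow, mul_pow, hr2]
  have E4 : deriv (deriv f₂) t / f₂ t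
      = γ ^ 2 * (2 * k ^ 2 * sn (γ * t) ^ 2 - (1 + k ^ 2)) := by
    simp only [Hdd₂, hf₂]
    rw [hsn2]
    exact JE4 γ _ k hγ0 hs0
  have E5 : (1 - (deriv f₂ t) ^ 2) / f₂ t ^ 2
      = γ ^ 2 * (1 + k ^ 2 - k ^ 2 * sn (γ * t) ^ 2) := by
    simp only [Hd₂, hf₂]
    exact JE5 γ _ _ k hγ0 hs0 (hsn1 (γ * t))
  have E6 : f₂ t ^ 2 = sn (γ * t) ^ 2 / γ ^ 2 := by
    rw [hf₂ t, div_pow]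
  have E7 : (deriv f₁ t * deriv f₂ t) / (f₁ t * f₂ t)
      = -(γ ^ 2 * (1 - k ^ 2 * sn (γ * t) ^ 2)) := by
    simp only [Hd₁, Hd₂, hf₁, hf₂]
    exact JE7 γ _ _ _ _ _ k hγ0 hr0 hc0 hs0 hpq
  rw [E1, E2, E4, E5, E7, E3, E6]
  exact JEfinal γ _ _ k a₁ a₂ _ _ hγ0 hk2pos.ne' (hpyth (γ * t)) (by linarith [hconstraint])
end

section
/- Suppose k₁, k₂ ≥ 1 are integers with k₂ = k₁ + 1, a₁ > 0, a₂ ≥ 0. For k ∈ (0,1) near 1 define γ(k)² = √(1/((k₁+k₂)(k₁+k₂+3))) · √((a₁² - (1-k²)a₂²)/(k²(1-k²))) and R(k) = (k₁+k₂)(k₁+k₂+1-2(k₁+1)k²)γ(k)² - a₂²/γ(k)². Then R(k) → 0 as k → 1⁻. -/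
open Filter Set

/-- for integers k₁, k₂ ≥ 1 with k₂ = k₁ + 1, a₁ > 0, a₂ ≥ 0, with
γ(k)² = √(1/((k₁+k₂)(k₁+k₂+3)))·√((a₁²-(1-k²)a₂²)/(k²(1-k²))) and
R(k) = (k₁+k₂)(k₁+k₂+1-2(k₁+1)k²)γ(k)² - a₂²/γ(k)², one has R(k) → 0 as k → 1⁻. -/
theorem R_tendsto_zero_of_eq
    (k₁ k₂ : ℤ) (hk₁ : 1 ≤ k₁) (hk₂ : 1 ≤ k₂) (heq : k₂ = k₁ + 1)
    (a₁ a₂ : ℝ) (ha₁ : 0 < a₁) (ha₂ : 0 ≤ a₂)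
    (γf R : ℝ → ℝ)
    (hγpos : ∀ k ∈ Ioo (0 : ℝ) 1, 0 < γf k)
    (hγ : ∀ k ∈ Ioo (0 : ℝ) 1, (γf k) ^ 2 =
      Real.sqrt (1 / (((k₁ : ℝ) + k₂) * ((k₁ : ℝ) + k₂ + 3)))
        * Real.sqrt ((a₁ ^ 2 - (1 - k ^ 2) * a₂ ^ 2) / (k ^ 2 * (1 - k ^ 2))))
    (hR : ∀ k ∈ Ioo (0 : ℝ) 1, R k =
      ((k₁ : ℝ) + k₂) * (((k₁ : ℝ) + k₂ + 1) - 2 * ((k₁ : ℝ) + 1) * k ^ 2) * (γf k) ^ 2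
        - a₂ ^ 2 / (γf k) ^ 2) :
    Tendsto R (nhdsWithin 1 (Iio 1)) (nhds 0) := by
  have hc : (k₂ : ℝ) = (k₁ : ℝ) + 1 := by exact_mod_cast heq
  simp only [hc] at hγ hR
  have hK1 : (1 : ℝ) ≤ (k₁ : ℝ) := by exact_mod_cast hk₁
  set K : ℝ := (k₁ : ℝ) with hK
  set C : ℝ := Real.sqrt (1 / ((K + (K + 1)) * (K + (K + 1) + 3))) with hCdef
  have hCpos : 0 < C := by
    apply Real.sqrt_pos.mpr
    have : (0:ℝ) < (K + (K + 1)) * (K + (K + 1) + 3) := by nlinarith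
    positivity
  have hmem : Ioo (0 : ℝ) 1 ∈ nhdsWithin (1:ℝ) (Iio 1) :=
    Ioo_mem_nhdsLT_of_mem ⟨by norm_num, le_refl 1⟩
  -- first piece: (1-k²)·γ² → 0
  have h1 : Tendsto (fun k : ℝ => (1 - k ^ 2) * γf k ^ 2) (nhdsWithin 1 (Iio 1)) (nhds 0) := by
    have hcont : Tendsto (fun k : ℝ =>
        C * Real.sqrt ((1 - k ^ 2) * (a₁ ^ 2 - (1 - k ^ 2) * a₂ ^ 2) / k ^ 2))
        (nhdsWithin 1 (Iio 1)) (nhds 0) := by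
      have hca : ContinuousAt (fun k : ℝ =>
          C * Real.sqrt ((1 - k ^ 2) * (a₁ ^ 2 - (1 - k ^ 2) * a₂ ^ 2) / k ^ 2)) 1 := by
        apply ContinuousAt.mul continuousAt_const
        exact Real.continuous_sqrt.continuousAt.comp
          (ContinuousAt.div (by fun_prop) (by fun_prop) (by norm_num))
      have hval : C * Real.sqrt ((1 - (1:ℝ) ^ 2) * (a₁ ^ 2 - (1 - (1:ℝ) ^ 2) * a₂ ^ 2) / (1:ℝ) ^ 2) = 0 := by
        norm_num
      have h' : Tendsto (fun k : ℝ =>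
          C * Real.sqrt ((1 - k ^ 2) * (a₁ ^ 2 - (1 - k ^ 2) * a₂ ^ 2) / k ^ 2))
          (nhdsWithin 1 (Iio 1))
          (nhds (C * Real.sqrt ((1 - (1:ℝ) ^ 2) * (a₁ ^ 2 - (1 - (1:ℝ) ^ 2) * a₂ ^ 2) / (1:ℝ) ^ 2))) :=
        hca.tendsto.mono_left nhdsWithin_le_nhds
      rwa [hval] at h'
    refine hcont.congr' ?_
    filter_upwards [hmem] with k hk
    have hk0 : k ≠ 0 := ne_of_gt hk.1
    have hk1 : 0 < 1 - k ^ 2 := by nlinarith [hk.1, hk.2]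
    have e1 : (1 - k ^ 2) * (a₁ ^ 2 - (1 - k ^ 2) * a₂ ^ 2) / k ^ 2
        = (1 - k ^ 2) ^ 2 * ((a₁ ^ 2 - (1 - k ^ 2) * a₂ ^ 2) / (k ^ 2 * (1 - k ^ 2))) := by
      field_simp
    rw [hγ k hk, e1, Real.sqrt_mul (sq_nonneg _), Real.sqrt_sq hk1.le]
    ring
  -- second piece: γ² → ∞, hence a₂²/γ² → 0
  have hnum : Tendsto (fun k : ℝ => a₁ ^ 2 - (1 - k ^ 2) * a₂ ^ 2)
      (nhdsWithin 1 (Iio 1)) (nhds (a₁ ^ 2)) := by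
    have : Tendsto (fun k : ℝ => a₁ ^ 2 - (1 - k ^ 2) * a₂ ^ 2) (nhds 1)
        (nhds (a₁ ^ 2 - (1 - (1:ℝ) ^ 2) * a₂ ^ 2)) := (by fun_prop : Continuous _).tendsto 1
    simpa using this.mono_left nhdsWithin_le_nhds
  have hden : Tendsto (fun k : ℝ => k ^ 2 * (1 - k ^ 2))
      (nhdsWithin 1 (Iio 1)) (nhdsWithin 0 (Ioi 0)) := by
    rw [tendsto_nhdsWithin_iff]
    constructor
    · have : Tendsto (fun k : ℝ => k ^ 2 * (1 - k ^ 2)) (nhds 1)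
          (nhds ((1:ℝ) ^ 2 * (1 - (1:ℝ) ^ 2))) := (by fun_prop : Continuous _).tendsto 1
      simpa using this.mono_left nhdsWithin_le_nhds
    · filter_upwards [hmem] with k hk
      have hk1 : 0 < 1 - k ^ 2 := by nlinarith [hk.1, hk.2]
      exact mul_pos (pow_pos hk.1 2) hk1
  have hdiv : Tendsto (fun k : ℝ => (a₁ ^ 2 - (1 - k ^ 2) * a₂ ^ 2) / (k ^ 2 * (1 - k ^ 2)))
      (nhdsWithin 1 (Iio 1)) atTop := by
    simp only [div_eq_mul_inv]
    exact Filter.Tendsto.pos_mul_atTop (pow_pos ha₁ 2) hnum hden.inv_tendsto_nhdsGT_zero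
  have hs : Tendsto Real.sqrt atTop atTop := by
    rw [tendsto_atTop_atTop]
    intro b
    refine ⟨(max b 0) ^ 2, fun a ha => ?_⟩
    calc b ≤ max b 0 := le_max_left _ _
    _ = Real.sqrt ((max b 0) ^ 2) := (Real.sqrt_sq (le_max_right _ _)).symm
    _ ≤ Real.sqrt a := Real.sqrt_le_sqrt ha
  have hγtop : Tendsto (fun k : ℝ => γf k ^ 2) (nhdsWithin 1 (Iio 1)) atTop := by
    have := Filter.Tendsto.const_mul_atTop hCpos (hs.comp hdiv)
    refine this.congr' ?_
    filter_upwards [hmem] with k hk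
    exact (hγ k hk).symm
  have h2 : Tendsto (fun k : ℝ => a₂ ^ 2 / γf k ^ 2) (nhdsWithin 1 (Iio 1)) (nhds 0) :=
    Filter.Tendsto.div_atTop tendsto_const_nhds hγtop
  have hmain : Tendsto (fun k : ℝ =>
      2 * (K + (K + 1)) * (K + 1) * ((1 - k ^ 2) * γf k ^ 2) - a₂ ^ 2 / γf k ^ 2)
      (nhdsWithin 1 (Iio 1)) (nhds 0) := by
    simpa using (h1.const_mul (2 * (K + (K + 1)) * (K + 1))).sub h2
  refine hmain.congr' ?_
  filter_upwards [hmem] with k hk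
  rw [hR k hk]
  ring
end

section
/- Let π : (M,g) → (B,ǧ) be a Riemannian submersion with totally geodesic fibers and constant scalar curvature R(g), and for c > 0 let g_c = ǧ ⊕ c·ĝ be the connection metric with scalar curvature R(g_c) = π*R(ǧ) + c⁻¹R̂ - c|A|². If R(g_c) is constant for some c ≠ 1, c > 0, then |A| is constant on M (and hence R(ǧ) and R̂ are constant). -/
/-- claim (3.5) in Proposition 3.2, abstract derivation formulation: Let
π : (M,g) → (B,ǧ) be a Riemannian submersion with totally geodesic fibers and constant
scalar curvature R(g) = π*R(ǧ) + R̂ - |A|², and for c > 0 let g_c = ǧ ⊕ c·ĝ be the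
connection metric, with R(g_c) = π*R(ǧ) + c⁻¹R̂ - c|A|².  Derivatives along vector
fields on B and their horizontal lifts are modeled by `act` and `lift` as in the
derivation formulation; H(R̂) = 0 by Lemma 3.1.  If R(g_c) is constant for some
c ≠ 1, c > 0, then |A| is constant on M (and hence R(ǧ) and R̂ are constant). -/
theorem A_constant_of_rescaled_csc
    {M B : Type*} (π : M → B) (hπ : Function.Surjective π)
    (VFB : Type*)
    (act : VFB → (B → ℝ) → (B → ℝ))
    (lift : VFB → (M → ℝ) → (M → ℝ))
    (c : ℝ) (hc : 0 < c) (hc1 : c ≠ 1)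
    (Rg Rgc Rhat Asq : M → ℝ) (Rcheck : B → ℝ)
    -- O'Neill's formula for g and for g_c = ǧ ⊕ c·ĝ
    (hONeill : ∀ x, Rg x = Rcheck (π x) + Rhat x - Asq x)
    (hONeillc : ∀ x, Rgc x = Rcheck (π x) + c⁻¹ * Rhat x - c * Asq x)
    -- R(g) and R(g_c) are constant
    (hRg : ∀ x y, Rg x = Rg y)
    (hRgc : ∀ x y, Rgc x = Rgc y)
    -- H(π*f) = π*(Ȟ f) for horizontal lifts
    (hlift_pull : ∀ v (f : B → ℝ) x, lift v (fun y => f (π y)) x = act v f (π x))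
    -- Lemma 3.1: H(R̂) = 0
    (hRhat : ∀ v x, lift v Rhat x = 0)
    -- lift v is a derivative: additive, ℝ-homogeneous, kills constants
    (hlift_sub : ∀ v (f g : M → ℝ) x,
      lift v (fun y => f y - g y) x = lift v f x - lift v g x)
    (hlift_smul : ∀ v (a : ℝ) (f : M → ℝ) x,
      lift v (fun y => a * f y) x = a * lift v f x)
    (hlift_const : ∀ v (a : ℝ) x, lift v (fun _ => a) x = 0)
    -- connectedness: a function on B with vanishing derivative along all fields is constant
    (hspan : ∀ f : B → ℝ, (∀ v x, act v f x = 0) → ∀ b₁ b₂, f b₁ = f b₂) :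
    (∀ x y, Asq x = Asq y) ∧ (∀ b₁ b₂, Rcheck b₁ = Rcheck b₂) ∧
      (∀ x y, Rhat x = Rhat y) := by
  have hc0 : c ≠ 0 := ne_of_gt hc
  -- lift of Rg and Rgc vanish since they are constant
  have hliftRg : ∀ v x, lift v Rg x = 0 := by
    intro v x
    have h : Rg = fun _ => Rg x := funext fun y => hRg y x
    rw [h]; exact hlift_const v _ x
  have hliftRgc : ∀ v x, lift v Rgc x = 0 := by
    intro v x
    have h : Rgc = fun _ => Rgc x := funext fun y => hRgc y x
    rw [h]; exact hlift_const v _ x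
  -- key equation (A): act v Rcheck (π x) - lift v Asq x = 0
  have keyA : ∀ v x, act v Rcheck (π x) - lift v Asq x = 0 := by
    intro v x
    have e : Rg = fun y => (fun z => Rcheck (π z)) y - (fun z => Asq z - Rhat z) y :=
      funext fun y => by rw [hONeill]; ring
    have h1 : lift v Rg x
        = lift v (fun z => Rcheck (π z)) x - lift v (fun z => Asq z - Rhat z) x := by
      rw [e]; exact hlift_sub v _ _ x
    have h2 : lift v (fun z => Asq z - Rhat z) x = lift v Asq x - lift v Rhat x :=
      hlift_sub v _ _ x
    have := hliftRg v x
    rw [h1, h2, hlift_pull v Rcheck x, hRhat v x] at this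
    linarith
  -- key equation (B): act v Rcheck (π x) - c * lift v Asq x = 0
  have keyB : ∀ v x, act v Rcheck (π x) - c * lift v Asq x = 0 := by
    intro v x
    have e : Rgc = fun y => (fun z => Rcheck (π z)) y
        - (fun z => (fun w => c * Asq w) z - (fun w => c⁻¹ * Rhat w) z) y :=
      funext fun y => by rw [hONeillc]; ring
    have h1 : lift v Rgc x
        = lift v (fun z => Rcheck (π z)) x
          - lift v (fun z => (fun w => c * Asq w) z - (fun w => c⁻¹ * Rhat w) z) x := by
      rw [e]; exact hlift_sub v _ _ x
    have h2 : lift v (fun z => (fun w => c * Asq w) z - (fun w => c⁻¹ * Rhat w) z) x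
        = lift v (fun w => c * Asq w) x - lift v (fun w => c⁻¹ * Rhat w) x :=
      hlift_sub v _ _ x
    have := hliftRgc v x
    rw [h1, h2, hlift_pull v Rcheck x, hlift_smul v c Asq x,
      hlift_smul v c⁻¹ Rhat x, hRhat v x] at this
    linarith
  -- hence lift v Asq = 0 and act v Rcheck = 0
  have hAsq0 : ∀ v x, lift v Asq x = 0 := by
    intro v x
    have hA := keyA v x
    have hB := keyB v x
    have : (c - 1) * lift v Asq x = 0 := by linarith
    rcases mul_eq_zero.mp this with h | h
    · exact absurd (by linarith : c = 1) hc1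
    · exact h
  have hact0 : ∀ v b, act v Rcheck b = 0 := by
    intro v b
    obtain ⟨x, rfl⟩ := hπ b
    have := keyA v x
    rw [hAsq0 v x] at this
    linarith
  have hRcheck : ∀ b₁ b₂, Rcheck b₁ = Rcheck b₂ := hspan Rcheck hact0
  -- Rhat constant: (c - c⁻¹) * Rhat x = c * Rg x - Rgc x - (c-1) * Rcheck (π x)
  have hcc : c - c⁻¹ ≠ 0 := by
    intro h
    have : c * c = 1 := by
      field_simp at h
      nlinarith [sq_nonneg c]
    have : (c - 1) * (c + 1) = 0 := by ring_nf; nlinarith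
    rcases mul_eq_zero.mp this with h1 | h1
    · exact hc1 (by linarith)
    · linarith
  have hRhatConst : ∀ x y, Rhat x = Rhat y := by
    intro x y
    have hx : (c - c⁻¹) * Rhat x = c * Rg x - Rgc x - (c - 1) * Rcheck (π x) := by
      rw [hONeill x, hONeillc x]; ring
    have hy : (c - c⁻¹) * Rhat y = c * Rg y - Rgc y - (c - 1) * Rcheck (π y) := by
      rw [hONeill y, hONeillc y]; ring
    have : (c - c⁻¹) * Rhat x = (c - c⁻¹) * Rhat y := by
      rw [hx, hy, hRg x y, hRgc x y, hRcheck (π x) (π y)]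
    exact mul_left_cancel₀ hcc this
  refine ⟨?_, hRcheck, hRhatConst⟩
  intro x y
  have hx := hONeill x
  have hy := hONeill y
  have := hRg x y
  have := hRcheck (π x) (π y)
  have := hRhatConst x y
  linarith
end
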